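/- arXiv:1201.3564 — 2 statements merged into one kernel-verified Lean document; each statement's English description precedes it below -/
import Mathlib

section
/- For a nondegenerate triangle K in ℝ² and i ≠ j, |K| (∇φ_i)·(∇φ_j) = −(1/2) cot(α_{ij}), where α_{ij} is the angle of K at the vertex opposite the edge connecting a_i and a_j (equivalently, the angle between the edges S_i and S_j). -/
open MeasureTheory
open scoped RealInnerProductSpace Pointwise

/-! With `x = a i - a k`, `y = a j - a k` the edges at the third vertex, `|K| = |x ∧ y| / 2`.
The gradients `g i`, `g j` form the basis dual to `(x, y)`; in the plane this forces
`g i = n i / ⟪n i, x⟫` and `g j = n j / ⟪n j, y⟫`, so `⟪g i, g j⟫ ⟪n i, x⟫ ⟪n j, y⟫ = -cos α`.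
The Binet–Cauchy identity gives `|n i ∧ n j| |x ∧ y| = ⟪n i, x⟫ ⟪n j, y⟫`, and
`sin α = |n i ∧ n j|` by Lagrange's identity, whence `|K| ⟪g i, g j⟫ = -cos α / (2 sin α)`. -/

def wedge (u v : EuclideanSpace ℝ (Fin 2)) : ℝ := u 0 * v 1 - u 1 * v 0

lemma inner_fin_two (x y : EuclideanSpace ℝ (Fin 2)) : ⟪x, y⟫ = x 0 * y 0 + x 1 * y 1 := by
  simp [PiLp.inner_apply, Fin.sum_univ_two, mul_comm]

lemma norm_sq_fin_two (x : EuclideanSpace ℝ (Fin 2)) : ‖x‖ ^ 2 = x 0 ^ 2 + x 1 ^ 2 := by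
  rw [← real_inner_self_eq_norm_sq, inner_fin_two]; ring

lemma wedge_swap (u v : EuclideanSpace ℝ (Fin 2)) : wedge u v = -wedge v u := by
  unfold wedge; ring

lemma wedge_mul_wedge (w w' u v : EuclideanSpace ℝ (Fin 2)) :
    wedge w w' * wedge u v = ⟪w, u⟫ * ⟪w', v⟫ - ⟪w, v⟫ * ⟪w', u⟫ := by
  simp only [wedge, inner_fin_two]; ring

lemma inner_sq_add_wedge_sq (x y : EuclideanSpace ℝ (Fin 2)) :
    ⟪x, y⟫ ^ 2 + wedge x y ^ 2 = ‖x‖ ^ 2 * ‖y‖ ^ 2 := by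
  simp only [wedge, inner_fin_two, norm_sq_fin_two]; ring

lemma inner_smul_eq_inner_smul_of_inner_eq_zero {u v w w' : EuclideanSpace ℝ (Fin 2)}
    (huv : wedge u v ≠ 0) (hw : ⟪w, u⟫ = 0) (hw' : ⟪w', u⟫ = 0) :
    ⟪w', v⟫ • w = ⟪w, v⟫ • w' := by
  have hww' : wedge w w' = 0 := by
    simpa [hw, hw', huv] using wedge_mul_wedge w w' u v
  unfold wedge at hww'
  ext m
  fin_cases m <;> simp only [inner_fin_two, PiLp.smul_apply, smul_eq_mul, Fin.zero_eta,
    Fin.mk_one] <;> [linear_combination v 1 * hww'; linear_combination -v 0 * hww']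

lemma sin_eq_abs_wedge {α : ℝ} {x y : EuclideanSpace ℝ (Fin 2)} (hα : α ∈ Set.Ioo 0 Real.pi)
    (hx : ‖x‖ = 1) (hy : ‖y‖ = 1) (hcos : Real.cos α = -⟪x, y⟫) :
    Real.sin α = |wedge x y| := by
  have hsq : 1 - Real.cos α ^ 2 = wedge x y ^ 2 := by
    have h := inner_sq_add_wedge_sq x y
    rw [hx, hy] at h
    rw [hcos]
    linear_combination -h
  rw [Real.sin_eq_sqrt_one_sub_cos_sq hα.1.le hα.2.le, hsq, Real.sqrt_sq_eq_abs]

lemma abs_wedge_mul_abs_wedge {x y ni nj : EuclideanSpace ℝ (Fin 2)}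
    (hni : ⟪ni, y⟫ = 0) (hnj : ⟪nj, x⟫ = 0) (hni_pos : 0 < ⟪ni, x⟫) (hnj_pos : 0 < ⟪nj, y⟫) :
    |wedge ni nj| * |wedge x y| = ⟪ni, x⟫ * ⟪nj, y⟫ := by
  rw [← abs_mul, wedge_mul_wedge, hni, hnj, mul_zero, sub_zero,
    abs_of_pos (mul_pos hni_pos hnj_pos)]

lemma inner_dual_mul_eq_inner {x y gi gj ni nj : EuclideanSpace ℝ (Fin 2)}
    (hxy : wedge x y ≠ 0) (hgix : ⟪gi, x⟫ = 1) (hgiy : ⟪gi, y⟫ = 0) (hgjx : ⟪gj, x⟫ = 0)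
    (hgjy : ⟪gj, y⟫ = 1) (hni : ⟪ni, y⟫ = 0) (hnj : ⟪nj, x⟫ = 0) :
    ⟪gi, gj⟫ * (⟪ni, x⟫ * ⟪nj, y⟫) = ⟪ni, nj⟫ := by
  have hyx : wedge y x ≠ 0 := by rw [wedge_swap]; exact neg_ne_zero.2 hxy
  have hi : ⟪ni, x⟫ • gi = ni := by
    rw [inner_smul_eq_inner_smul_of_inner_eq_zero hyx hgiy hni, hgix, one_smul]
  have hj : ⟪nj, y⟫ • gj = nj := by
    rw [inner_smul_eq_inner_smul_of_inner_eq_zero hxy hgjx hnj, hgjy, one_smul]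
  calc ⟪gi, gj⟫ * (⟪ni, x⟫ * ⟪nj, y⟫) = ⟪⟪ni, x⟫ • gi, ⟪nj, y⟫ • gj⟫ := by
        rw [real_inner_smul_left, real_inner_smul_right]; ring
    _ = ⟪ni, nj⟫ := by rw [hi, hj]

def stdTriangle : Set (ℝ × ℝ) := {p | 0 ≤ p.1 ∧ 0 ≤ p.2 ∧ p.1 + p.2 ≤ 1}

lemma measurableSet_stdTriangle : MeasurableSet stdTriangle :=
  (measurableSet_le measurable_const measurable_fst).inter
    ((measurableSet_le measurable_const measurable_snd).inter
      (measurableSet_le (measurable_fst.add measurable_snd) measurable_const))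

lemma volume_stdTriangle : volume stdTriangle = ENNReal.ofReal (1 / 2) := by
  have hsection (x : ℝ) : volume (Prod.mk x ⁻¹' stdTriangle) =
      (Set.Icc 0 1).indicator (fun x => ENNReal.ofReal (1 - x)) x := by
    rcases lt_or_ge x 0 with hx | hx
    · have hempty : Prod.mk x ⁻¹' stdTriangle = ∅ := by
        ext y; simp [stdTriangle, hx.not_ge]
      rw [hempty, Set.indicator_of_notMem (fun h => hx.not_ge h.1), measure_empty]
    · have hIcc : Prod.mk x ⁻¹' stdTriangle = Set.Icc 0 (1 - x) := by
        ext y; simp [stdTriangle, hx, le_sub_iff_add_le']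
      rw [hIcc, Real.volume_Icc, sub_zero]
      by_cases hx1 : x ≤ 1
      · rw [Set.indicator_of_mem (Set.mem_Icc.2 ⟨hx, hx1⟩)]
      · rw [Set.indicator_of_notMem (fun h => hx1 h.2), ENNReal.ofReal_of_nonpos (by linarith)]
  rw [Measure.volume_eq_prod, Measure.prod_apply measurableSet_stdTriangle,
    lintegral_congr hsection, lintegral_indicator measurableSet_Icc,
    ← ofReal_integral_eq_lintegral_ofReal]
  · rw [integral_Icc_eq_integral_Ioc, ← intervalIntegral.integral_of_le zero_le_one,
      intervalIntegral.integral_comp_sub_left (fun x => x)]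
    norm_num
  · exact (continuous_const.sub continuous_id).integrableOn_Icc
  · filter_upwards [ae_restrict_mem measurableSet_Icc] with x hx
    simpa using hx.2

lemma preimage_stdTriangle_eq_convexHull :
    (fun x : EuclideanSpace ℝ (Fin 2) => (x 0, x 1)) ⁻¹' stdTriangle =
      convexHull ℝ {0, EuclideanSpace.single 0 1, EuclideanSpace.single 1 1} := by
  refine Set.Subset.antisymm ?_ (convexHull_min ?_ ?_)
  · rintro x ⟨h0, h1, h2⟩
    refine mem_convexHull_of_exists_fintype ![1 - x 0 - x 1, x 0, x 1]
      ![0, EuclideanSpace.single 0 1, EuclideanSpace.single 1 1] ?_ ?_ ?_ ?_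
    · intro i; fin_cases i <;> simp only [Fin.zero_eta, Fin.mk_one, Fin.reduceFinMk, Matrix.cons_val_zero,
        Matrix.cons_val_one, Matrix.cons_val] <;> linarith
    · simp only [Fin.sum_univ_three, Matrix.cons_val_zero, Matrix.cons_val_one,
        Matrix.cons_val]
      ring
    · intro i; fin_cases i <;> simp
    · ext i; fin_cases i <;> simp [Fin.sum_univ_three]
  · rintro _ (rfl | rfl | rfl) <;> simp [stdTriangle]
  · rintro x ⟨hx0, hx1, hx2⟩ y ⟨hy0, hy1, hy2⟩ a b ha hb hab
    simp only [Set.mem_preimage, stdTriangle, Set.mem_ofPred_eq, PiLp.add_apply,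
      PiLp.smul_apply, smul_eq_mul]
    refine ⟨by positivity, by positivity, by nlinarith⟩

lemma volume_convexHull_triangle (p q r : EuclideanSpace ℝ (Fin 2)) :
    volume (convexHull ℝ {p, q, r}) = ENNReal.ofReal (|wedge (q - p) (r - p)| / 2) := by
  set A := Matrix.toLpLin 2 2 !![(q - p) 0, (r - p) 0; (q - p) 1, (r - p) 1]
  have himage : ({p, q, r} : Set (EuclideanSpace ℝ (Fin 2))) =
      p +ᵥ A '' {0, EuclideanSpace.single 0 1, EuclideanSpace.single 1 1} := by
    have h0 : A (EuclideanSpace.single 0 1) = q - p := by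
      ext i; fin_cases i <;> simp [A, Matrix.toLpLin_apply]
    have h1 : A (EuclideanSpace.single 1 1) = r - p := by
      ext i; fin_cases i <;> simp [A, Matrix.toLpLin_apply]
    simp [Set.image_insert_eq, h0, h1, Set.vadd_set_insert, vadd_eq_add]
  have hpres : MeasurePreserving (fun x : EuclideanSpace ℝ (Fin 2) => (x 0, x 1)) :=
    (volume_preserving_finTwoArrow ℝ).comp (PiLp.volume_preserving_ofLp (Fin 2))
  rw [himage, convexHull_vadd, ← LinearMap.image_convexHull,
    ← preimage_stdTriangle_eq_convexHull, measure_vadd, Measure.addHaar_image_linearMap,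
    hpres.measure_preimage measurableSet_stdTriangle.nullMeasurableSet, volume_stdTriangle,
    LinearMap.det_toLpLin, Matrix.det_fin_two_of, ← ENNReal.ofReal_mul (abs_nonneg _)]
  congr 1
  simp only [wedge]; ring_nf

lemma range_fin_three_eq {β : Type*} (a : Fin 3 → β) {i j k : Fin 3} (hij : i ≠ j) (hki : k ≠ i)
    (hkj : k ≠ j) : Set.range a = {a k, a i, a j} := by
  ext x
  simp only [Set.mem_range, Set.mem_insert_iff, Set.mem_singleton_iff]
  constructor
  · rintro ⟨m, rfl⟩
    have hm : m = k ∨ m = i ∨ m = j := by revert m i j k; decide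
    rcases hm with rfl | rfl | rfl <;> simp
  · rintro (rfl | rfl | rfl) <;> exact ⟨_, rfl⟩

theorem stmt3_general
    (a : Fin 3 → EuclideanSpace ℝ (Fin 2))
    (φ : Fin 3 → (EuclideanSpace ℝ (Fin 2) →ᵃ[ℝ] ℝ))
    (hφ : ∀ i j, φ i (a j) = if i = j then 1 else 0)
    (g : Fin 3 → EuclideanSpace ℝ (Fin 2))
    (hg : ∀ i v, (φ i).linear v = ⟪g i, v⟫)
    (n : Fin 3 → EuclideanSpace ℝ (Fin 2))
    (hn_unit : ∀ i, ‖n i‖ = 1)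
    (hn_orth : ∀ i j k, j ≠ i → k ≠ i → ⟪n i, a j - a k⟫ = 0)
    (hn_toward : ∀ i j, j ≠ i → 0 < ⟪n i, a i - a j⟫)
    (α : Fin 3 → Fin 3 → ℝ)
    (hα_mem : ∀ i j, i ≠ j → α i j ∈ Set.Ioo 0 Real.pi)
    (hα : ∀ i j, i ≠ j → Real.cos (α i j) = -⟪n i, n j⟫) :
    ∀ i j, i ≠ j →
      (volume (convexHull ℝ (Set.range a))).toReal * ⟪g i, g j⟫
        = -(1 / 2) * Real.cot (α i j) := by
  intro i j hij
  obtain ⟨k, hki, hkj⟩ : ∃ k : Fin 3, k ≠ i ∧ k ≠ j := by revert i j; decide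
  have hgrad (m x y : Fin 3) : ⟪g m, a x - a y⟫ = φ m (a x) - φ m (a y) := by
    rw [← hg, ← vsub_eq_sub, AffineMap.linearMap_vsub, vsub_eq_sub]
  have hnorm := abs_wedge_mul_abs_wedge (hn_orth i j k hij.symm hki) (hn_orth j i k hij hkj)
    (hn_toward i k hki) (hn_toward j k hkj)
  have hpos : 0 < |wedge (n i) (n j)| * |wedge (a i - a k) (a j - a k)| :=
    hnorm ▸ mul_pos (hn_toward i k hki) (hn_toward j k hkj)
  have hdual := inner_dual_mul_eq_inner (gi := g i) (gj := g j)
    (abs_pos.1 (pos_of_mul_pos_right hpos (abs_nonneg _)))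
    (by simp [hgrad, hφ, hki.symm]) (by simp [hgrad, hφ, hij, hki.symm])
    (by simp [hgrad, hφ, hij.symm, hkj.symm]) (by simp [hgrad, hφ, hkj.symm])
    (hn_orth i j k hij.symm hki) (hn_orth j i k hij hkj)
  rw [range_fin_three_eq a hij hki hkj, volume_convexHull_triangle,
    ENNReal.toReal_ofReal (by positivity), Real.cot_eq_cos_div_sin, hα i j hij,
    sin_eq_abs_wedge (hα_mem i j hij) (hn_unit i) (hn_unit j) (hα i j hij)]
  field_simp [(pos_of_mul_pos_left hpos (abs_nonneg _)).ne']
  linear_combination ⟪g i, g j⟫ * hnorm + hdual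

/-- For a nondegenerate triangle `K ⊂ ℝ²` and `i ≠ j`,
`|K| ⟪∇φ_i, ∇φ_j⟫ = -(1/2) cot (α i j)`, where `α i j ∈ (0, π)` is the interior
angle of `K` between the edges opposite `a i` and `a j`, characterized by
`cos (α i j) = -⟪n i, n j⟫` for the unit inward normals. -/
theorem stmt3
    (a : Fin 3 → EuclideanSpace ℝ (Fin 2))
    (ha : AffineIndependent ℝ a)
    (φ : Fin 3 → (EuclideanSpace ℝ (Fin 2) →ᵃ[ℝ] ℝ))
    (hφ : ∀ i j, φ i (a j) = if i = j then 1 else 0)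
    (g : Fin 3 → EuclideanSpace ℝ (Fin 2))
    (hg : ∀ i v, (φ i).linear v = ⟪g i, v⟫)
    (n : Fin 3 → EuclideanSpace ℝ (Fin 2))
    (hn_unit : ∀ i, ‖n i‖ = 1)
    (hn_orth : ∀ i j k, j ≠ i → k ≠ i → ⟪n i, a j - a k⟫ = 0)
    (hn_toward : ∀ i j, j ≠ i → 0 < ⟪n i, a i - a j⟫)
    (α : Fin 3 → Fin 3 → ℝ)
    (hα_mem : ∀ i j, i ≠ j → α i j ∈ Set.Ioo 0 Real.pi)
    (hα : ∀ i j, i ≠ j → Real.cos (α i j) = -⟪n i, n j⟫) :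
    ∀ i j, i ≠ j →
      (volume (convexHull ℝ (Set.range a))).toReal * ⟪g i, g j⟫
        = -(1 / 2) * Real.cot (α i j) :=
  stmt3_general a φ hφ g hg n hn_unit hn_orth hn_toward α hα_mem hα
end

section
/- For a nondegenerate triangle K in ℝ², a symmetric positive definite 2×2 matrix D_K, and i ≠ j: |K| (∇φ_i)^T D_K (∇φ_j) = −(det(D_K)^{1/2} / 2) cot(α_{ij, D_K^{-1}}), where α_{ij, D_K^{-1}} is the angle of the transformed triangle D_K^{-1/2} K between the images of edges S_i and S_j. -/
/-!
Let `k` be the third vertex. Since `φ m (a n) = δ m n`, the gradients `g i`, `g j` are the dual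
basis of the edge vectors `a i - a k`, `a j - a k`; by the two-dimensional Binet–Cauchy identity
`cross (g i) (g j) * cross (a i - a k) (a j - a k) = 1`, and the second factor is `± 2 |K|`.
Lagrange's identity for the `D`-inner product,
`(g i ⬝ D g i) (g j ⬝ D g j) - (g i ⬝ D g j)² = det D * cross (g i) (g j)²`,
gives `sin α = √(det D) |cross (g i) (g j)| / (‖g i‖_D ‖g j‖_D)`, hence
`cot α = -(g i ⬝ D g j) / (√(det D) |cross (g i) (g j)|) = -2 |K| (g i ⬝ D g j) / √(det D)`.
-/

open MeasureTheory Matrix Set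
open scoped RealInnerProductSpace Real Pointwise

def cross (u v : Fin 2 → ℝ) : ℝ := u 0 * v 1 - u 1 * v 0

theorem cross_mul_cross (x y u v : Fin 2 → ℝ) :
    cross x y * cross u v = (x ⬝ᵥ u) * (y ⬝ᵥ v) - (x ⬝ᵥ v) * (y ⬝ᵥ u) := by
  simp only [cross, dotProduct, Fin.sum_univ_two]
  ring

theorem dotProduct_mulVec_mul_sub_sq {D : Matrix (Fin 2) (Fin 2) ℝ} (hD : D.IsHermitian)
    (u v : Fin 2 → ℝ) :
    (u ⬝ᵥ D *ᵥ u) * (v ⬝ᵥ D *ᵥ v) - (u ⬝ᵥ D *ᵥ v) ^ 2 = D.det * cross u v ^ 2 := by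
  have hsym : D 1 0 = D 0 1 := by simpa using hD.apply 0 1
  simp only [cross, dotProduct, mulVec, det_fin_two, Fin.sum_univ_two, hsym]
  ring

theorem Real.cot_eq_of_cos_eq_div {θ p r s : ℝ} (hθ : θ ∈ Ioo 0 π) (hcos : cos θ = p / r)
    (hr : 0 < r) (hs : 0 ≤ s) (hpyth : p ^ 2 + s ^ 2 = r ^ 2) : cot θ = p / s := by
  have hsin : sin θ = s / r := by
    rw [sin_eq_sqrt_one_sub_cos_sq hθ.1.le hθ.2.le, hcos, div_pow,
      one_sub_div (pow_pos hr 2).ne', show r ^ 2 - p ^ 2 = s ^ 2 by linarith,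
      Real.sqrt_div' _ (by positivity),
      Real.sqrt_sq hs, Real.sqrt_sq hr.le]
  rw [cot_eq_cos_div_sin, hcos, hsin, div_div_div_cancel_right₀ hr.ne']

theorem volume_stdTriangle_prod :
    volume {p : ℝ × ℝ | p.1 ∈ Icc 0 1 ∧ p.2 ∈ Icc 0 (1 - p.1)} = ENNReal.ofReal (1 / 2) := by
  have hslice (x : ℝ) :
      volume (Prod.mk x ⁻¹' {p : ℝ × ℝ | p.1 ∈ Icc 0 1 ∧ p.2 ∈ Icc 0 (1 - p.1)}) =
        (Icc 0 1).indicator (fun x => ENNReal.ofReal (1 - x)) x := by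
    by_cases hx : x ∈ Icc (0:ℝ) 1
    · rw [indicator_of_mem hx, ← sub_zero (1 - x), ← Real.volume_Icc]
      congr 1
      ext y
      simp [hx.1, hx.2]
    · rw [indicator_of_notMem hx, mem_Icc] at *
      simp [preimage, hx]
  rw [Measure.volume_eq_prod, Measure.prod_apply
    (measurableSet_region_between_cc measurable_const (by fun_prop) measurableSet_Icc)]
  simp_rw [hslice]
  rw [lintegral_indicator measurableSet_Icc, ← ofReal_integral_eq_lintegral_ofReal,
    integral_Icc_eq_integral_Ioc, ← intervalIntegral.integral_of_le zero_le_one]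
  · rw [intervalIntegral.integral_sub intervalIntegrable_const
      intervalIntegral.intervalIntegrable_id]
    norm_num
  · exact (continuous_const.sub continuous_id).integrableOn_Icc
  · filter_upwards [ae_restrict_mem measurableSet_Icc] with x hx
    simp only [Pi.zero_apply, sub_nonneg]; exact hx.2

theorem convexHull_zero_single_single :
    convexHull ℝ {0, EuclideanSpace.single 0 1, EuclideanSpace.single 1 1} =
      (fun x : EuclideanSpace ℝ (Fin 2) => (x 0, x 1)) ⁻¹'
        {p : ℝ × ℝ | p.1 ∈ Icc 0 1 ∧ p.2 ∈ Icc 0 (1 - p.1)} := by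
  apply le_antisymm
  · refine convexHull_min ?_ ?_
    · rintro x (rfl | rfl | rfl) <;> simp
    · rintro x ⟨⟨hx0, -⟩, hx1, hx⟩ y ⟨⟨hy0, -⟩, hy1, hy⟩ s t hs ht hst
      simp only [mem_preimage, mem_ofPred_eq, mem_Icc, PiLp.add_apply, PiLp.smul_apply,
        smul_eq_mul] at *
      refine ⟨⟨by positivity, ?_⟩, by positivity, ?_⟩ <;> nlinarith
  · rintro x ⟨⟨hx0, -⟩, hx1, hx⟩
    have hsum := (convex_convexHull ℝ ({0, EuclideanSpace.single 0 1, EuclideanSpace.single 1 1} :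
        Set (EuclideanSpace ℝ (Fin 2)))).sum_mem (t := Finset.univ)
      (w := ![1 - x 0 - x 1, x 0, x 1])
      (z := ![0, EuclideanSpace.single 0 1, EuclideanSpace.single 1 1])
      (by intro i _; fin_cases i <;> simp <;> linarith)
      (by simp [Fin.sum_univ_three]; ring)
      (by intro i _; fin_cases i <;> exact subset_convexHull ℝ _ (by simp))
    convert hsum
    ext i
    fin_cases i <;> simp [Fin.sum_univ_three]

theorem volume_convexHull_zero_single_single :
    volume (convexHull ℝ ({0, EuclideanSpace.single 0 1, EuclideanSpace.single 1 1} :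
      Set (EuclideanSpace ℝ (Fin 2)))) = ENNReal.ofReal (1 / 2) := by
  have hψ : MeasurePreserving (fun x : EuclideanSpace ℝ (Fin 2) => (x 0, x 1)) :=
    (volume_preserving_finTwoArrow ℝ).comp
      (EuclideanSpace.volume_preserving_symm_measurableEquiv_toLp (Fin 2))
  rw [convexHull_zero_single_single, ← volume_stdTriangle_prod]
  exact hψ.measure_preimage (measurableSet_region_between_cc measurable_const (by fun_prop)
    measurableSet_Icc).nullMeasurableSet

theorem volume_convexHull_triple (p q r : EuclideanSpace ℝ (Fin 2)) :
    volume (convexHull ℝ {p, q, r}) = ENNReal.ofReal (|cross (q - p) (r - p)| / 2) := by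
  set M : Matrix (Fin 2) (Fin 2) ℝ := (Matrix.of ![⇑(q - p), ⇑(r - p)])ᵀ
  set L := Matrix.toLpLin 2 2 M
  have himage : ({p, q, r} : Set (EuclideanSpace ℝ (Fin 2))) =
      p +ᵥ L '' {0, EuclideanSpace.single 0 1, EuclideanSpace.single 1 1} := by
    have h0 : L (EuclideanSpace.single 0 1) = q - p := by
      ext i; simp [L, M, mulVec, dotProduct, Fin.sum_univ_two]
    have h1 : L (EuclideanSpace.single 1 1) = r - p := by
      ext i; simp [L, M, mulVec, dotProduct, Fin.sum_univ_two]
    simp [image_insert_eq, h0, h1, vadd_set_insert]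
  have hdet : LinearMap.det L = cross (q - p) (r - p) := by
    rw [LinearMap.det_toLpLin, det_transpose, det_fin_two]
    simp [cross]
  rw [himage, convexHull_vadd, ← LinearMap.image_convexHull, measure_vadd,
    Measure.addHaar_image_linearMap, volume_convexHull_zero_single_single, hdet,
    ← ENNReal.ofReal_mul (abs_nonneg _), mul_one_div]

theorem AffineMap.dotProduct_sub_eq_of_linear_eq_inner {ι : Type*} [Fintype ι]
    (f : EuclideanSpace ℝ ι →ᵃ[ℝ] ℝ) {w : EuclideanSpace ℝ ι} (hf : ∀ v, f.linear v = ⟪w, v⟫)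
    (x y : EuclideanSpace ℝ ι) : (w : ι → ℝ) ⬝ᵥ (x - y) = f x - f y := by
  rw [← WithLp.ofLp_sub, dotProduct_comm, ← star_trivial (WithLp.ofLp w),
    ← EuclideanSpace.inner_eq_star_dotProduct, ← hf, ← vsub_eq_sub, f.linearMap_vsub, vsub_eq_sub]

theorem Fin.exists_range_eq_triple {α : Type*} (a : Fin 3 → α) {i j : Fin 3} (hij : i ≠ j) :
    ∃ k, k ≠ i ∧ k ≠ j ∧ range a = {a k, a i, a j} := by
  obtain ⟨k, hki, hkj⟩ : ∃ k, k ≠ i ∧ k ≠ j := by revert i j; decide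
  refine ⟨k, hki, hkj, ?_⟩
  have hcover : ∀ m, m = k ∨ m = i ∨ m = j := by revert i j k; decide
  ext x
  constructor
  · rintro ⟨m, rfl⟩
    rcases hcover m with rfl | rfl | rfl <;> simp
  · rintro (rfl | rfl | rfl) <;> exact mem_range_self _

theorem stmt9_general
    (D : Matrix (Fin 2) (Fin 2) ℝ) (hD : D.PosDef)
    (a : Fin 3 → EuclideanSpace ℝ (Fin 2))
    (φ : Fin 3 → (EuclideanSpace ℝ (Fin 2) →ᵃ[ℝ] ℝ))
    (hφ : ∀ i j, φ i (a j) = if i = j then 1 else 0)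
    (g : Fin 3 → EuclideanSpace ℝ (Fin 2))
    (hg : ∀ i v, (φ i).linear v = ⟪g i, v⟫)
    (α : Fin 3 → Fin 3 → ℝ)
    (hα_mem : ∀ i j, i ≠ j → α i j ∈ Set.Ioo 0 Real.pi)
    (hα : ∀ i j, i ≠ j → Real.cos (α i j)
      = -(((g i : Fin 2 → ℝ) ⬝ᵥ D.mulVec (g j))
          / (Real.sqrt ((g i : Fin 2 → ℝ) ⬝ᵥ D.mulVec (g i))
            * Real.sqrt ((g j : Fin 2 → ℝ) ⬝ᵥ D.mulVec (g j))))) :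
    ∀ i j, i ≠ j →
      (volume (convexHull ℝ (Set.range a))).toReal * ((g i : Fin 2 → ℝ) ⬝ᵥ D.mulVec (g j))
        = -(Real.sqrt D.det / 2) * Real.cot (α i j) := by
  intro i j hij
  obtain ⟨k, hki, hkj, hrange⟩ := Fin.exists_range_eq_triple a hij
  have hdot m n : (g m : Fin 2 → ℝ) ⬝ᵥ (a n - a k) = φ m (a n) - φ m (a k) :=
    (φ m).dotProduct_sub_eq_of_linear_eq_inner (hg m) _ _
  have hcross : cross (g i) (g j) * cross (a i - a k) (a j - a k) = 1 := by
    rw [cross_mul_cross]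
    simp only [hdot, hφ]
    simp [hij, hij.symm, hki.symm, hkj.symm]
  have hvol : (volume (convexHull ℝ (range a))).toReal = |cross (a i - a k) (a j - a k)| / 2 := by
    rw [hrange, volume_convexHull_triple, ENNReal.toReal_ofReal (by positivity)]
  have hgi : (g i : Fin 2 → ℝ) ≠ 0 := by rintro h; simp [cross, h] at hcross
  have hgj : (g j : Fin 2 → ℝ) ≠ 0 := by rintro h; simp [cross, h] at hcross
  have hni := hD.dotProduct_mulVec_pos hgi
  have hnj := hD.dotProduct_mulVec_pos hgj
  rw [star_trivial] at hni hnj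
  have hdetD := hD.det_pos
  have hgram := dotProduct_mulVec_mul_sub_sq hD.isHermitian (g i) (g j)
  have hcot : Real.cot (α i j)
      = -((g i : Fin 2 → ℝ) ⬝ᵥ D *ᵥ (g j)) / (√D.det * |cross (g i) (g j)|) := by
    refine Real.cot_eq_of_cos_eq_div (hα_mem i j hij) (by rw [hα i j hij, neg_div])
      (by positivity) (by positivity) ?_
    rw [mul_pow, mul_pow, Real.sq_sqrt hni.le, Real.sq_sqrt hnj.le, Real.sq_sqrt hdetD.le, sq_abs]
    linarith
  have harea : |cross (a i - a k) (a j - a k)| = |cross (g i) (g j)|⁻¹ :=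
    eq_inv_of_mul_eq_one_right (by rw [← abs_mul, hcross, abs_one])
  rw [hvol, hcot, harea]
  field_simp

/-- For a nondegenerate triangle `K ⊂ ℝ²`, a symmetric positive definite `2×2`
matrix `D`, and `i ≠ j`:
`|K| (∇φ_i)^T D (∇φ_j) = -(det(D)^{1/2} / 2) cot (α i j)`, where `α i j ∈ (0, π)`
satisfies `cos (α i j) = -(q_i^T D q_j)/(‖q_i‖_D ‖q_j‖_D)` with `q_i = ∇φ_i`. -/
theorem stmt9
    (D : Matrix (Fin 2) (Fin 2) ℝ) (hD : D.PosDef)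
    (a : Fin 3 → EuclideanSpace ℝ (Fin 2))
    (ha : AffineIndependent ℝ a)
    (φ : Fin 3 → (EuclideanSpace ℝ (Fin 2) →ᵃ[ℝ] ℝ))
    (hφ : ∀ i j, φ i (a j) = if i = j then 1 else 0)
    (g : Fin 3 → EuclideanSpace ℝ (Fin 2))
    (hg : ∀ i v, (φ i).linear v = ⟪g i, v⟫)
    (α : Fin 3 → Fin 3 → ℝ)
    (hα_mem : ∀ i j, i ≠ j → α i j ∈ Set.Ioo 0 Real.pi)
    (hα : ∀ i j, i ≠ j → Real.cos (α i j)
      = -(((g i : Fin 2 → ℝ) ⬝ᵥ D.mulVec (g j))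
          / (Real.sqrt ((g i : Fin 2 → ℝ) ⬝ᵥ D.mulVec (g i))
            * Real.sqrt ((g j : Fin 2 → ℝ) ⬝ᵥ D.mulVec (g j))))) :
    ∀ i j, i ≠ j →
      (volume (convexHull ℝ (Set.range a))).toReal * ((g i : Fin 2 → ℝ) ⬝ᵥ D.mulVec (g j))
        = -(Real.sqrt D.det / 2) * Real.cot (α i j) :=
  stmt9_general D hD a φ hφ g hg α hα_mem hα
end
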